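/- arXiv:2502.10586 — 5 statements merged into one kernel-verified Lean document; each statement's English description precedes it below -/
import Mathlib

section
/- Let n, r ≥ 1 and let (α, β, v¹, v²) be a stable ADHM datum of size (n, r) satisfying the moment map equation [α, β] + v¹v² = 0. If g ∈ GL_n(ℂ) satisfies g·(α, β, v¹, v²) = (α, β, v¹, v²), then g = 1. In other words, GL_n(ℂ) acts freely on the set of stable solutions of the moment map equation. -/
/-- `GL_n(ℂ)` acts freely on the set of stable solutions of the
ADHM moment map equation: if `g` fixes a stable ADHM datum satisfying
`[α,β] + v¹v² = 0`, then `g = 1`. -/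
theorem stmt_0 (n r : ℕ) (hn : 1 ≤ n) (hr : 1 ≤ r)
    (α β : Matrix (Fin n) (Fin n) ℂ)
    (v1 : Matrix (Fin n) (Fin r) ℂ) (v2 : Matrix (Fin r) (Fin n) ℂ)
    (hmm : α * β - β * α + v1 * v2 = 0)
    (hstab : ∀ W : Submodule ℂ (Fin n → ℂ),
      (∀ j : Fin r, (fun i => v1 i j) ∈ W) →
      (∀ x ∈ W, α.mulVec x ∈ W) →
      (∀ x ∈ W, β.mulVec x ∈ W) → W = ⊤)
    (g : (Matrix (Fin n) (Fin n) ℂ)ˣ)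
    (hα : (g : Matrix (Fin n) (Fin n) ℂ) * α *
        ((g⁻¹ : (Matrix (Fin n) (Fin n) ℂ)ˣ) : Matrix (Fin n) (Fin n) ℂ) = α)
    (hβ : (g : Matrix (Fin n) (Fin n) ℂ) * β *
        ((g⁻¹ : (Matrix (Fin n) (Fin n) ℂ)ˣ) : Matrix (Fin n) (Fin n) ℂ) = β)
    (hv1 : (g : Matrix (Fin n) (Fin n) ℂ) * v1 = v1)
    (hv2 : v2 * ((g⁻¹ : (Matrix (Fin n) (Fin n) ℂ)ˣ) : Matrix (Fin n) (Fin n) ℂ) = v2) :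
    g = 1 := by
  set G : Matrix (Fin n) (Fin n) ℂ := (g : Matrix (Fin n) (Fin n) ℂ) with hG
  -- g commutes with α and β
  have hgg : G * ((g⁻¹ : (Matrix (Fin n) (Fin n) ℂ)ˣ) : Matrix (Fin n) (Fin n) ℂ) = 1 := by
    rw [hG]; exact_mod_cast g.mul_inv
  have hinv : ((g⁻¹ : (Matrix (Fin n) (Fin n) ℂ)ˣ) : Matrix (Fin n) (Fin n) ℂ) * G = 1 := by
    rw [hG]; exact_mod_cast g.inv_mul
  have hgα : G * α = α * G := by
    conv_rhs => rw [← hα]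
    simp only [mul_assoc, hinv, mul_one]
  have hgβ : G * β = β * G := by
    conv_rhs => rw [← hβ]
    simp only [mul_assoc, hinv, mul_one]
  -- the fixed subspace
  let W : Submodule ℂ (Fin n → ℂ) := LinearMap.ker ((G - 1).mulVecLin)
  have hmem : ∀ x, x ∈ W ↔ G.mulVec x = x := by
    intro x
    simp [W, Matrix.sub_mulVec, sub_eq_zero]
  have hW : W = ⊤ := by
    apply hstab
    · intro j
      rw [hmem]
      funext i
      have := congrFun (congrFun hv1 i) j
      simpa [Matrix.mul_apply, Matrix.mulVec, dotProduct] using this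
    · intro x hx
      rw [hmem] at hx ⊢
      calc G.mulVec (α.mulVec x) = (G * α).mulVec x := by rw [Matrix.mulVec_mulVec]
        _ = (α * G).mulVec x := by rw [hgα]
        _ = α.mulVec (G.mulVec x) := by rw [Matrix.mulVec_mulVec]
        _ = α.mulVec x := by rw [hx]
    · intro x hx
      rw [hmem] at hx ⊢
      calc G.mulVec (β.mulVec x) = (G * β).mulVec x := by rw [Matrix.mulVec_mulVec]
        _ = (β * G).mulVec x := by rw [hgβ]
        _ = β.mulVec (G.mulVec x) := by rw [Matrix.mulVec_mulVec]
        _ = β.mulVec x := by rw [hx]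
  have hfix : ∀ x : Fin n → ℂ, G.mulVec x = x := by
    intro x
    have : x ∈ W := hW ▸ Submodule.mem_top
    exact (hmem x).mp this
  have hG1 : G = 1 := by
    ext i j
    have := congrFun (hfix (Pi.single j 1)) i
    simpa [Matrix.mulVec_single, Pi.single_apply, Matrix.one_apply] using this
  exact Units.ext hG1
end

section
/- Let (α, β, v¹, v²) be a stable ADHM datum of size (n, r) and let g ∈ GL_n(ℂ) satisfy the fixed-point equations ζα = gαg⁻¹, ζ⁻¹β = gβg⁻¹, v¹t⁻¹ = gv¹ and tv² = v²g⁻¹. Then g^ℓ = 1. (Consequently g endows ℂⁿ with the structure of a representation of the cyclic group of order ℓ.) -/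
/-- if `g ∈ GL_n(ℂ)` satisfies the `Γ_s`-fixed-point equations for a
stable ADHM datum, where `ζ` is a primitive `ℓ`-th root of unity and
`t = diag(ζ^{s_1},…,ζ^{s_r})`, then `g^ℓ = 1`. -/
theorem stmt_2 (n r ℓ : ℕ) (hn : 1 ≤ n) (hr : 1 ≤ r) (hℓ : 1 ≤ ℓ)
    (ζ : ℂ) (hζ : IsPrimitiveRoot ζ ℓ)
    (s : Fin r → ZMod ℓ) (sz : Fin r → ℤ) (hs : ∀ j, ((sz j : ℤ) : ZMod ℓ) = s j)
    (α β : Matrix (Fin n) (Fin n) ℂ)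
    (v1 : Matrix (Fin n) (Fin r) ℂ) (v2 : Matrix (Fin r) (Fin n) ℂ)
    (hstab : ∀ W : Submodule ℂ (Fin n → ℂ),
      (∀ j : Fin r, (fun i => v1 i j) ∈ W) →
      (∀ x ∈ W, α.mulVec x ∈ W) →
      (∀ x ∈ W, β.mulVec x ∈ W) → W = ⊤)
    (g : (Matrix (Fin n) (Fin n) ℂ)ˣ)
    (hα : ζ • α = (g : Matrix (Fin n) (Fin n) ℂ) * α *
        ((g⁻¹ : (Matrix (Fin n) (Fin n) ℂ)ˣ) : Matrix (Fin n) (Fin n) ℂ))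
    (hβ : ζ⁻¹ • β = (g : Matrix (Fin n) (Fin n) ℂ) * β *
        ((g⁻¹ : (Matrix (Fin n) (Fin n) ℂ)ˣ) : Matrix (Fin n) (Fin n) ℂ))
    (hv1 : v1 * Matrix.diagonal (fun j => ζ ^ (-(sz j))) =
        (g : Matrix (Fin n) (Fin n) ℂ) * v1)
    (hv2 : Matrix.diagonal (fun j => ζ ^ (sz j)) * v2 =
        v2 * ((g⁻¹ : (Matrix (Fin n) (Fin n) ℂ)ˣ) : Matrix (Fin n) (Fin n) ℂ)) :
    g ^ ℓ = 1 := by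
  set M : Matrix (Fin n) (Fin n) ℂ := (g : Matrix (Fin n) (Fin n) ℂ) with hM
  have h0 : ζ ≠ 0 := hζ.ne_zero (by omega)
  have hζℓ : ζ ^ ℓ = 1 := hζ.pow_eq_one
  -- basic relations obtained by multiplying the hypotheses on the right by g
  have hgα : M * α = ζ • (α * M) := by
    rw [← Matrix.smul_mul, hα, hM, Units.inv_mul_cancel_right]
  have hgβ : M * β = ζ⁻¹ • (β * M) := by
    rw [← Matrix.smul_mul, hβ, hM, Units.inv_mul_cancel_right]
  set D : Matrix (Fin r) (Fin r) ℂ := Matrix.diagonal (fun j => ζ ^ (-(sz j))) with hD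
  -- powers
  have hpowα : ∀ m : ℕ, M ^ m * α = ζ ^ m • (α * M ^ m) := by
    intro m
    induction m with
    | zero => simp
    | succ m ih =>
      calc M ^ (m + 1) * α = M * (M ^ m * α) := by rw [pow_succ', mul_assoc]
      _ = M * (ζ ^ m • (α * M ^ m)) := by rw [ih]
      _ = ζ ^ m • (M * α * M ^ m) := by rw [mul_smul_comm, mul_assoc]
      _ = ζ ^ m • (ζ • (α * M) * M ^ m) := by rw [hgα]
      _ = ζ ^ (m + 1) • (α * M ^ (m + 1)) := by
          rw [Matrix.smul_mul, smul_smul, ← pow_succ, mul_assoc, ← pow_succ']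
  have hpowβ : ∀ m : ℕ, M ^ m * β = (ζ⁻¹) ^ m • (β * M ^ m) := by
    intro m
    induction m with
    | zero => simp
    | succ m ih =>
      calc M ^ (m + 1) * β = M * (M ^ m * β) := by rw [pow_succ', mul_assoc]
      _ = M * ((ζ⁻¹) ^ m • (β * M ^ m)) := by rw [ih]
      _ = (ζ⁻¹) ^ m • (M * β * M ^ m) := by rw [mul_smul_comm, mul_assoc]
      _ = (ζ⁻¹) ^ m • (ζ⁻¹ • (β * M) * M ^ m) := by rw [hgβ]
      _ = (ζ⁻¹) ^ (m + 1) • (β * M ^ (m + 1)) := by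
          rw [Matrix.smul_mul, smul_smul, ← pow_succ, mul_assoc, ← pow_succ']
  have hpowv : ∀ m : ℕ, M ^ m * v1 = v1 * D ^ m := by
    intro m
    induction m with
    | zero => simp
    | succ m ih =>
      calc M ^ (m + 1) * v1 = M * (M ^ m * v1) := by rw [pow_succ', Matrix.mul_assoc]
      _ = M * (v1 * D ^ m) := by rw [ih]
      _ = (M * v1) * D ^ m := by rw [Matrix.mul_assoc]
      _ = (v1 * D) * D ^ m := by rw [hv1]
      _ = v1 * D ^ (m + 1) := by rw [Matrix.mul_assoc, ← pow_succ']
  set G : Matrix (Fin n) (Fin n) ℂ := M ^ ℓ with hG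
  have hGα : G * α = α * G := by
    have := hpowα ℓ
    rwa [hζℓ, one_smul] at this
  have hGβ : G * β = β * G := by
    have := hpowβ ℓ
    rwa [inv_pow, hζℓ, inv_one, one_smul] at this
  have key : ∀ a : ℤ, (ζ ^ a) ^ ℓ = 1 := by
    intro a
    rw [← zpow_natCast (ζ ^ a), ← zpow_mul, mul_comm, zpow_mul,
      zpow_natCast, hζℓ, one_zpow]
  have hDℓ : D ^ ℓ = 1 := by
    rw [hD, Matrix.diagonal_pow]
    ext i j
    by_cases h : i = j <;>
      simp [Matrix.diagonal_apply, Matrix.one_apply, h, key]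
  have hGv : G * v1 = v1 := by
    rw [hG, hpowv ℓ, hDℓ, Matrix.mul_one]
  -- the fixed subspace of G
  let W : Submodule ℂ (Fin n → ℂ) := LinearMap.ker (G.mulVecLin - LinearMap.id)
  have hmemW : ∀ x, x ∈ W ↔ G.mulVec x = x := by
    intro x
    simp [W, LinearMap.mem_ker, sub_eq_zero]
  have hv1W : ∀ j : Fin r, (fun i => v1 i j) ∈ W := by
    intro j
    rw [hmemW]
    funext i
    simpa [Matrix.mulVec, Matrix.mul_apply, dotProduct] using
      congrFun (congrFun hGv i) j
  have hαW : ∀ x ∈ W, α.mulVec x ∈ W := by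
    intro x hx
    rw [hmemW] at hx ⊢
    rw [Matrix.mulVec_mulVec, hGα, ← Matrix.mulVec_mulVec, hx]
  have hβW : ∀ x ∈ W, β.mulVec x ∈ W := by
    intro x hx
    rw [hmemW] at hx ⊢
    rw [Matrix.mulVec_mulVec, hGβ, ← Matrix.mulVec_mulVec, hx]
  have hWtop := hstab W hv1W hαW hβW
  have hGall : ∀ x, G.mulVec x = x := by
    intro x
    have : x ∈ W := hWtop ▸ Submodule.mem_top
    rwa [hmemW] at this
  have hG1 : G = 1 := by
    ext i j
    have := congrFun (hGall (Pi.single j 1)) i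
    simpa [Matrix.mulVec_single, Pi.single_apply, Matrix.one_apply, eq_comm] using this
  refine Units.ext ?_
  rw [Units.val_pow_eq_pow_val, Units.val_one]
  exact hG1
end

section
/- Let ℓ ≥ 2, let λ be a partition, k ∈ ℤ/ℓℤ a charge, and i ∈ ℤ/ℓℤ. Then the subset of ℕ² obtained from the Young diagram Y(λ) by deleting all removable i-nodes of (λ, k) and adding all addable i-nodes of (λ, k) is again the Young diagram of a partition. (Hence the Weyl group generator s_i acts on charged partitions, and componentwise on charged multipartitions.) -/
/-- A partition: a non-increasing function `ℕ → ℕ` that is eventually zero. -/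
def IsPartition (f : ℕ → ℕ) : Prop :=
  (∀ m n : ℕ, m ≤ n → f n ≤ f m) ∧ ∃ N : ℕ, ∀ n : ℕ, N ≤ n → f n = 0

/-- The Young diagram of `f`: the set of pairs `(a,b)` with `a < f b`. -/
def young (f : ℕ → ℕ) : Set (ℕ × ℕ) := {p : ℕ × ℕ | p.1 < f p.2}

/-- A node `p` of `f` is removable if deleting it leaves the Young diagram of a
partition. -/
def IsRemovable (f : ℕ → ℕ) (p : ℕ × ℕ) : Prop :=
  p ∈ young f ∧ ∃ g : ℕ → ℕ, IsPartition g ∧ young g = young f \ {p}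

/-- A pair `p ∉ Y(f)` is an addable node if adding it gives the Young diagram of
a partition. -/
def IsAddable (f : ℕ → ℕ) (p : ℕ × ℕ) : Prop :=
  p ∉ young f ∧ ∃ g : ℕ → ℕ, IsPartition g ∧ young g = young f ∪ {p}

/-- The residue `b - a + k ∈ ℤ/ℓℤ` of a node `p = (a,b)` with charge `k`. -/
def nodeRes (ℓ : ℕ) (k : ZMod ℓ) (p : ℕ × ℕ) : ZMod ℓ :=
  (p.2 : ZMod ℓ) - (p.1 : ZMod ℓ) + k

lemma nat_eq_of_lt_iff {m n : ℕ} (h : ∀ a, a < m ↔ a < n) : m = n :=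
  le_antisymm (by by_contra hc; have := (h n).mp (by omega); omega)
    (by by_contra hc; have := (h m).mpr (by omega); omega)

lemma removable_iff {f : ℕ → ℕ} (hf : IsPartition f) (x y : ℕ) :
    IsRemovable f (x, y) ↔ x + 1 = f y ∧ f (y + 1) < f y := by
  constructor
  · rintro ⟨hxy, g, hg, hY⟩
    have hmem : ∀ a b, a < g b ↔ a < f b ∧ ¬(a = x ∧ b = y) := by
      intro a b
      have h := Set.ext_iff.mp hY (a, b)
      simp only [young, Set.mem_setOf_eq, Set.mem_diff, Set.mem_singleton_iff,
        Prod.mk.injEq] at h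
      tauto
    have hx : x < f y := hxy
    have hgy : g y ≤ x := by
      by_contra hc
      have := (hmem x y).mp (by omega)
      tauto
    have hfy : f y = x + 1 := by
      by_contra hc
      have h1 : x + 1 < f y := by omega
      have := (hmem (x + 1) y).mpr ⟨h1, by omega⟩
      omega
    refine ⟨hfy.symm, ?_⟩
    have hgy1 : g (y + 1) = f (y + 1) := by
      apply nat_eq_of_lt_iff
      intro a
      rw [hmem a (y + 1)]
      omega
    have := hg.1 y (y + 1) (by omega)
    omega
  · rintro ⟨hx, hstep⟩
    refine ⟨show x < f y by omega, fun b => if b = y then f y - 1 else f b, ⟨?_, ?_⟩, ?_⟩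
    · intro m n hmn
      dsimp only
      by_cases hm : m = y <;> by_cases hn : n = y
      · simp [hm, hn]
      · have h1 : y + 1 ≤ n := by omega
        have h2 := hf.1 (y + 1) n h1
        simp only [if_pos hm, if_neg hn]
        omega
      · have h2 := hf.1 m y (by omega)
        simp only [if_neg hm, if_pos hn]
        omega
      · simp only [if_neg hm, if_neg hn]
        exact hf.1 m n hmn
    · obtain ⟨N, hN⟩ := hf.2
      refine ⟨N, fun n hn => ?_⟩
      dsimp only
      have := hN n hn
      split_ifs with h
      · subst h; omega
      · exact this
    · ext ⟨a, b⟩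
      simp only [young, Set.mem_setOf_eq, Set.mem_diff, Set.mem_singleton_iff,
        Prod.mk.injEq]
      split_ifs with h
      · subst h; omega
      · omega

lemma addable_iff {f : ℕ → ℕ} (hf : IsPartition f) (x y : ℕ) :
    IsAddable f (x, y) ↔ x = f y ∧ (y = 0 ∨ f y < f (y - 1)) := by
  constructor
  · rintro ⟨hxy, g, hg, hY⟩
    have hmem : ∀ a b, a < g b ↔ a < f b ∨ (a = x ∧ b = y) := by
      intro a b
      have h := Set.ext_iff.mp hY (a, b)
      simp only [young, Set.mem_setOf_eq, Set.mem_union, Set.mem_singleton_iff,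
        Prod.mk.injEq] at h
      tauto
    have hx : ¬ x < f y := hxy
    have hxg : x < g y := (hmem x y).mpr (Or.inr ⟨rfl, rfl⟩)
    have hfx : f y = x := by
      have := (hmem (f y) y).mp (by omega)
      omega
    have hgy : g y = f y + 1 := by
      by_contra hc
      have h1 : x + 1 < g y := by omega
      have := (hmem (x + 1) y).mp h1
      omega
    constructor
    · omega
    · by_cases hy : y = 0
      · exact Or.inl hy
      · refine Or.inr ?_
        have h1 : g y ≤ g (y - 1) := hg.1 (y - 1) y (by omega)
        have h2 : g (y - 1) = f (y - 1) := by
          apply nat_eq_of_lt_iff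
          intro a
          rw [hmem a (y - 1)]
          omega
        omega
  · rintro ⟨hx, hcond⟩
    refine ⟨show ¬ (x, y) ∈ young f from by simp only [young, Set.mem_setOf_eq]; omega,
      fun b => if b = y then f y + 1 else f b, ⟨?_, ?_⟩, ?_⟩
    · intro m n hmn
      dsimp only
      by_cases hm : m = y <;> by_cases hn : n = y
      · simp [hm, hn]
      · have h2 := hf.1 y n (by omega)
        simp only [if_pos hm, if_neg hn]
        omega
      · have hy : y ≠ 0 := by omega
        have hlt : f y < f (y - 1) := by tauto
        have h2 := hf.1 m (y - 1) (by omega)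
        simp only [if_neg hm, if_pos hn]
        omega
      · simp only [if_neg hm, if_neg hn]
        exact hf.1 m n hmn
    · obtain ⟨N, hN⟩ := hf.2
      refine ⟨max N (y + 1), fun n hn => ?_⟩
      dsimp only
      rw [if_neg (by omega)]
      exact hN n (by omega)
    · ext ⟨a, b⟩
      simp only [young, Set.mem_setOf_eq, Set.mem_union, Set.mem_singleton_iff,
        Prod.mk.injEq]
      split_ifs with h
      · subst h; omega
      · omega

/-- for `ℓ ≥ 2`, removing all removable `i`-nodes and adding all
addable `i`-nodes of a charged partition `(λ,k)` again produces the Young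
diagram of a partition. -/
theorem stmt_4 (ℓ : ℕ) (hℓ : 2 ≤ ℓ) (f : ℕ → ℕ) (hf : IsPartition f)
    (k i : ZMod ℓ) :
    ∃ g : ℕ → ℕ, IsPartition g ∧
      young g =
        (young f \ {p : ℕ × ℕ | IsRemovable f p ∧ nodeRes ℓ k p = i}) ∪
          {p : ℕ × ℕ | IsAddable f p ∧ nodeRes ℓ k p = i} := by
  classical
  haveI : Fact (1 < ℓ) := ⟨hℓ⟩
  set A : ℕ → Prop := fun b => (b = 0 ∨ f b < f (b - 1)) ∧ nodeRes ℓ k (f b, b) = i with hA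
  set R : ℕ → Prop := fun b => f (b + 1) < f b ∧ nodeRes ℓ k (f b - 1, b) = i with hR
  -- a column cannot carry both an addable and a removable i-node (uses ℓ ≥ 2)
  have hAR : ∀ b, A b → R b → False := by
    intro b hAb hRb
    have hpos : 1 ≤ f b := by have := hRb.1; omega
    have h1 : (b : ZMod ℓ) - (f b : ZMod ℓ) + k = i := hAb.2
    have h2 : (b : ZMod ℓ) - ((f b - 1 : ℕ) : ZMod ℓ) + k = i := hRb.2
    rw [Nat.cast_sub hpos, Nat.cast_one] at h2
    have h3 : (1 : ZMod ℓ) = 0 := by linear_combination h2 - h1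
    exact one_ne_zero h3
  -- if column b has a removable i-node and column b+1 an addable one, heights differ ≥ 2
  have hRA : ∀ b, R b → A (b + 1) → f (b + 1) + 2 ≤ f b := by
    intro b hRb hAb
    have hpos : 1 ≤ f b := by have := hRb.1; omega
    have h1 : (b : ZMod ℓ) - ((f b - 1 : ℕ) : ZMod ℓ) + k = i := hRb.2
    rw [Nat.cast_sub hpos, Nat.cast_one] at h1
    have h2 : ((b + 1 : ℕ) : ZMod ℓ) - (f (b + 1) : ZMod ℓ) + k = i := hAb.2
    push_cast at h2
    have h3 : (f (b + 1) : ZMod ℓ) = (f b : ZMod ℓ) := by linear_combination h1 - h2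
    have h4 : f (b + 1) ≡ f b [MOD ℓ] := (ZMod.natCast_eq_natCast_iff _ _ _).mp h3
    have h5 : ℓ ∣ f b - f (b + 1) := (Nat.modEq_iff_dvd' (by have := hRb.1; omega)).mp h4
    have h6 := Nat.le_of_dvd (by have := hRb.1; omega) h5
    omega
  set g : ℕ → ℕ := fun b => if A b then f b + 1 else if R b then f b - 1 else f b with hg
  have hgub : ∀ b, g b ≤ f b + 1 := by
    intro b
    simp only [hg]
    split_ifs <;> omega
  have hglb : ∀ b, ¬ A b → g b ≤ f b := by
    intro b hb
    simp only [hg, if_neg hb]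
    split_ifs <;> omega
  refine ⟨g, ⟨?_, ?_⟩, ?_⟩
  · -- non-increasing
    have step : ∀ b, g (b + 1) ≤ g b := by
      intro b
      by_cases hAb : A b
      · have h1 : g b = f b + 1 := by simp only [hg]; rw [if_pos hAb]
        have h2 := hf.1 b (b + 1) (by omega)
        have h3 := hgub (b + 1)
        omega
      · by_cases hRb : R b
        · have h1 : g b = f b - 1 := by simp only [hg]; rw [if_neg hAb, if_pos hRb]
          by_cases hAb1 : A (b + 1)
          · have h2 : g (b + 1) = f (b + 1) + 1 := by simp only [hg]; rw [if_pos hAb1]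
            have h3 := hRA b hRb hAb1
            omega
          · have h2 := hglb (b + 1) hAb1
            have h3 := hRb.1
            omega
        · have h1 : g b = f b := by simp only [hg]; rw [if_neg hAb, if_neg hRb]
          by_cases hAb1 : A (b + 1)
          · have h2 : g (b + 1) = f (b + 1) + 1 := by simp only [hg]; rw [if_pos hAb1]
            have h3 : f (b + 1) < f b := by
              rcases hAb1.1 with h | h
              · omega
              · simpa using h
            omega
          · have h2 := hglb (b + 1) hAb1
            have h3 := hf.1 b (b + 1) (by omega)
            omega
    intro m n hmn
    exact antitone_nat_of_succ_le step hmn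
  · -- eventually zero
    obtain ⟨N, hN⟩ := hf.2
    refine ⟨N + 1, fun n hn => ?_⟩
    have h1 : f n = 0 := hN n (by omega)
    have h2 : f (n - 1) = 0 := hN (n - 1) (by omega)
    have hAn : ¬ A n := by
      rintro ⟨h | h, -⟩ <;> omega
    have := hglb n hAn
    omega
  · -- the Young diagram
    ext ⟨a, b⟩
    have hrem : ((a, b) ∈ {p : ℕ × ℕ | IsRemovable f p ∧ nodeRes ℓ k p = i}) ↔
        (a + 1 = f b ∧ R b) := by
      simp only [Set.mem_setOf_eq, removable_iff hf, hR]
      constructor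
      · rintro ⟨⟨h1, h2⟩, h3⟩
        refine ⟨h1, h2, ?_⟩
        rw [show f b - 1 = a by omega]
        exact h3
      · rintro ⟨h1, h2, h3⟩
        exact ⟨⟨h1, h2⟩, by rw [show a = f b - 1 by omega]; exact h3⟩
    have hadd : ((a, b) ∈ {p : ℕ × ℕ | IsAddable f p ∧ nodeRes ℓ k p = i}) ↔
        (a = f b ∧ A b) := by
      simp only [Set.mem_setOf_eq, addable_iff hf, hA]
      constructor
      · rintro ⟨⟨h1, h2⟩, h3⟩
        exact ⟨h1, h2, by rw [← h1]; exact h3⟩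
      · rintro ⟨h1, h2, h3⟩
        exact ⟨⟨h1, h2⟩, by rw [h1]; exact h3⟩
    simp only [Set.mem_union, Set.mem_diff, hrem, hadd]
    have hyoung : ((a, b) ∈ young g) ↔ a < g b := Iff.rfl
    have hyoungf : ((a, b) ∈ young f) ↔ a < f b := Iff.rfl
    rw [hyoung, hyoungf]
    by_cases hAb : A b
    · have hRb : ¬ R b := fun h => hAR b hAb h
      have h1 : g b = f b + 1 := by simp only [hg]; rw [if_pos hAb]
      rw [h1]
      constructor
      · intro h
        by_cases h' : a = f b
        · exact Or.inr ⟨h', hAb⟩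
        · exact Or.inl ⟨by omega, fun hc => hRb hc.2⟩
      · rintro (⟨h1, -⟩ | ⟨h1, -⟩) <;> omega
    · by_cases hRb : R b
      · have h1 : g b = f b - 1 := by simp only [hg]; rw [if_neg hAb, if_pos hRb]
        rw [h1]
        have hpos : 1 ≤ f b := by have := hRb.1; omega
        constructor
        · intro h
          exact Or.inl ⟨by omega, fun hc => by omega⟩
        · rintro (⟨h1, h2⟩ | ⟨h1, h2⟩)
          · by_cases hc : a + 1 = f b
            · exact absurd ⟨hc, hRb⟩ h2
            · omega
          · exact absurd h2 hAb
      · have h1 : g b = f b := by simp only [hg]; rw [if_neg hAb, if_neg hRb]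
        rw [h1]
        constructor
        · intro h
          exact Or.inl ⟨h, fun hc => hRb hc.2⟩
        · rintro (⟨h1, -⟩ | ⟨h1, h2⟩)
          · exact h1
          · exact absurd h2 hAb
end

section
/- Let (λ•, s) and (μ•, s) be two charged r-multipartitions (with the same ℓ and the same multicharge s). Then the following are equivalent: (i) Res_ℓ(λ•, s) = Res_ℓ(μ•, s); (ii) Θ_ℓ(λ•, s) = Θ_ℓ(μ•, s) and |λ•| = |μ•|; (iii) Θ_ℓ(λ•, s) = Θ_ℓ(μ•, s) and Ω_ℓ(λ•, s) = Ω_ℓ(μ•, s). (By Lyle–Mathas, condition (i) means exactly that the Specht modules indexed by λ• and μ• lie in the same block of the Ariki–Koike algebra H_{n,r}(ℓ,s).) -/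
/-- Nodes `(a,b,c)` of an `r`-multipartition: `a < λ^c_b`. -/
def mNodes {r : ℕ} (Λ : Fin r → ℕ → ℕ) : Set (ℕ × ℕ × Fin r) :=
  {q : ℕ × ℕ × Fin r | q.1 < Λ q.2.2 q.2.1}

/-- The residue vector: `(mRes ℓ Λ s i)` is the number of nodes of `Λ` of
residue `i` with respect to the multicharge `s`. -/
noncomputable def mRes (ℓ : ℕ) {r : ℕ} (Λ : Fin r → ℕ → ℕ) (s : Fin r → ZMod ℓ) (i : ZMod ℓ) : ℤ :=
  ((mNodes Λ ∩ {q : ℕ × ℕ × Fin r | nodeRes ℓ (s q.2.2) (q.1, q.2.1) = i}).ncard : ℤ)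

/-- `wMulti ℓ s i = #{j | s_j = i}`. -/
def wMulti (ℓ : ℕ) {r : ℕ} (s : Fin r → ZMod ℓ) (i : ZMod ℓ) : ℤ :=
  ((Finset.univ.filter fun j : Fin r => s j = i).card : ℤ)

/-- The hub: number of removable `i`-nodes minus number of addable `i`-nodes. -/
noncomputable def hub (ℓ : ℕ) {r : ℕ} (Λ : Fin r → ℕ → ℕ) (s : Fin r → ZMod ℓ) (i : ZMod ℓ) : ℤ :=
  (({q : ℕ × ℕ × Fin r | IsRemovable (Λ q.2.2) (q.1, q.2.1) ∧
      nodeRes ℓ (s q.2.2) (q.1, q.2.1) = i}).ncard : ℤ) -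
  (({q : ℕ × ℕ × Fin r | IsAddable (Λ q.2.2) (q.1, q.2.1) ∧
      nodeRes ℓ (s q.2.2) (q.1, q.2.1) = i}).ncard : ℤ)

/-- The weight `Ω_ℓ(λ•,s) = Σ_j d_{s_j} - (1/2) Σ_i (d_i - d_{i+1})²`,
computed in `ℚ`. -/
noncomputable def weight (ℓ : ℕ) [NeZero ℓ] {r : ℕ} (Λ : Fin r → ℕ → ℕ)
    (s : Fin r → ZMod ℓ) : ℚ :=
  (∑ j : Fin r, (mRes ℓ Λ s (s j) : ℚ)) -
    (1 / 2) * ∑ i : ZMod ℓ, ((mRes ℓ Λ s i - mRes ℓ Λ s (i + 1) : ℤ) : ℚ) ^ 2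

/-!
The `i`-nodes of row `b` of a component with charge `k` are the cells `(a, b)` with
`a ≡ b + k - i`, so their number is a count of integers `a < λ_b` in one residue class, and its
second difference in `i` only sees the two ends of the row. Summed over the rows of a partition,
the contributions of the row ends that are neither removable nor addable telescope, which gives
the hub as a discrete Laplacian of the residue vector `d`:
`Θ_i = 2 d_i - d_{i-1} - d_{i+1} - w_i`.

Equal hubs therefore make `d(λ•) - d(μ•)` harmonic on the cycle `ℤ/ℓℤ`, hence constant, say `c`.
The size `|λ•| = Σ_i d_i` then shifts by `ℓ c`, and the weight by `r c` (its quadratic part only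
sees the differences `d_i - d_{i+1}`), so either invariant forces `c = 0`.
-/

open Finset

section Partitions

variable {f : ℕ → ℕ}

lemma IsPartition.update (hf : IsPartition f) {b v : ℕ} (hnext : f (b + 1) ≤ v)
    (hprev : 0 < b → v ≤ f (b - 1)) : IsPartition (Function.update f b v) := by
  refine ⟨fun m n hmn => ?_, ?_⟩
  · simp only [Function.update_apply]
    split_ifs with hn hm hm
    · exact le_rfl
    · subst hn; exact (hprev (by omega)).trans (hf.1 m (n - 1) (by omega))
    · subst hm; exact (hf.1 (m + 1) n (by omega)).trans hnext
    · exact hf.1 m n hmn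
  · obtain ⟨N, hN⟩ := hf.2
    exact ⟨N + b + 1, fun n hn => by
      rw [Function.update_of_ne (by omega)]; exact hN n (by omega)⟩

lemma isRemovable_iff (hf : IsPartition f) (a b : ℕ) :
    IsRemovable f (a, b) ↔ a + 1 = f b ∧ f (b + 1) < f b := by
  constructor
  · rintro ⟨hab, g, hg, hyoung⟩
    have hab : a < f b := hab
    have hcell : ∀ x y, x < g y ↔ x < f y ∧ ¬(x = a ∧ y = b) := fun x y => by
      simpa [young] using Set.ext_iff.mp hyoung (x, y)
    have hlast : a + 1 = f b := by have := hcell a b; have := hcell (a + 1) b; omega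
    have hgb : g b = a := eq_of_forall_lt_iff fun x => by have := hcell x b; omega
    have hgnext : g (b + 1) = f (b + 1) := eq_of_forall_lt_iff fun x => by
      have := hcell x (b + 1); omega
    have := hg.1 b (b + 1) (by omega)
    omega
  · rintro ⟨hlast, hlt⟩
    refine ⟨show a < f b by omega, Function.update f b a, hf.update (by omega)
      (fun _ => by have := hf.1 (b - 1) b (by omega); omega), ?_⟩
    ext ⟨x, y⟩
    by_cases hy : y = b
    · subst hy
      simp only [young, Set.mem_ofPred_eq, Function.update_self, Set.mem_sdiff,
        Set.mem_singleton_iff, Prod.mk.injEq, and_true]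
      omega
    · simp [young, hy]

lemma isAddable_iff (hf : IsPartition f) (a b : ℕ) :
    IsAddable f (a, b) ↔ a = f b ∧ (b = 0 ∨ f b < f (b - 1)) := by
  constructor
  · rintro ⟨hab, g, hg, hyoung⟩
    have hab : ¬a < f b := hab
    have hcell : ∀ x y, x < g y ↔ (x = a ∧ y = b) ∨ x < f y := fun x y => by
      simpa [young] using Set.ext_iff.mp hyoung (x, y)
    have hend : a = f b := by have := hcell a b; have := hcell (f b) b; omega
    refine ⟨hend, ?_⟩
    rcases Nat.eq_zero_or_pos b with hb | hb
    · exact Or.inl hb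
    · have hgb : g b = f b + 1 := eq_of_forall_lt_iff fun x => by have := hcell x b; omega
      have hgprev : g (b - 1) = f (b - 1) := eq_of_forall_lt_iff fun x => by
        have := hcell x (b - 1); omega
      have := hg.1 (b - 1) b (by omega)
      omega
  · rintro ⟨rfl, hprev⟩
    refine ⟨by simp [young], Function.update f b (f b + 1),
      hf.update (by have := hf.1 b (b + 1) (by omega); omega) (fun _ => by omega), ?_⟩
    ext ⟨x, y⟩
    by_cases hy : y = b
    · subst hy
      simp only [young, Set.mem_ofPred_eq, Function.update_self, Set.union_singleton,
        Set.mem_insert_iff, Prod.mk.injEq, and_true]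
      omega
    · simp [young, hy]

end Partitions

section Rows

variable {ℓ : ℕ}

def rowCount (ℓ m : ℕ) (t : ZMod ℓ) : ℤ :=
  ∑ a ∈ range m, if (a : ZMod ℓ) = t then 1 else 0

lemma rowCount_second_diff (m : ℕ) (t : ZMod ℓ) :
    2 * rowCount ℓ m t - rowCount ℓ m (t + 1) - rowCount ℓ m (t - 1) =
      ((if t = 0 then 1 else 0) - if t = -1 then 1 else 0) +
        ((if (m : ZMod ℓ) - 1 = t then 1 else 0) - if (m : ZMod ℓ) = t then 1 else 0) := by
  induction m with
  | zero => simp [rowCount, eq_comm (b := t)]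
  | succ m ih =>
    simp only [rowCount, sum_range_succ] at ih ⊢
    have h1 : ((m : ZMod ℓ) = t + 1) ↔ ((m : ZMod ℓ) - 1 = t) := sub_eq_iff_eq_add.symm
    have h2 : ((m : ZMod ℓ) = t - 1) ↔ (((m + 1 : ℕ) : ZMod ℓ) = t) := by
      push_cast; exact eq_sub_iff_add_eq
    have h3 : (((m + 1 : ℕ) : ZMod ℓ) - 1 = t) ↔ ((m : ZMod ℓ) = t) := by
      push_cast; rw [add_sub_cancel_right]
    simp only [h1, h2, h3] at ih ⊢
    linarith

variable {f : ℕ → ℕ}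

-- Removable minus addable `i`-nodes in row `b` of `f` with charge `k`: they can only sit at the
-- last cell `(f b - 1, b)` and at the cell `(f b, b)` past the end of the row.
def rowHub (ℓ : ℕ) (f : ℕ → ℕ) (k i : ZMod ℓ) (b : ℕ) : ℤ :=
  (if f (b + 1) < f b ∧ (f b : ZMod ℓ) - 1 = b + k - i then 1 else 0) -
    if (b = 0 ∨ f b < f (b - 1)) ∧ (f b : ZMod ℓ) = b + k - i then 1 else 0

def blockedEnd (ℓ : ℕ) (f : ℕ → ℕ) (k i : ZMod ℓ) (b : ℕ) : ℤ :=
  if 0 < b ∧ f b = f (b - 1) ∧ (f b : ZMod ℓ) = b + k - i then 1 else 0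

lemma blockedEnd_succ (hf : IsPartition f) (k i : ZMod ℓ) (b : ℕ) :
    blockedEnd ℓ f k i (b + 1) =
      (if (f b : ZMod ℓ) - 1 = b + k - i then 1 else 0) -
        if f (b + 1) < f b ∧ (f b : ZMod ℓ) - 1 = b + k - i then 1 else 0 := by
  rcases (hf.1 b (b + 1) (by omega)).lt_or_eq with hlt | heq
  · simp [blockedEnd, hlt, hlt.ne]
  · have hres : (f b : ZMod ℓ) - 1 = b + k - i ↔
        (f b : ZMod ℓ) = ((b + 1 : ℕ) : ZMod ℓ) + k - i := by
      push_cast; constructor <;> intro h <;> linear_combination h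
    simp [blockedEnd, heq, hres]

lemma blockedEnd_eq (hf : IsPartition f) (k i : ZMod ℓ) (b : ℕ) :
    blockedEnd ℓ f k i b =
      (if (f b : ZMod ℓ) = b + k - i then 1 else 0) -
        if (b = 0 ∨ f b < f (b - 1)) ∧ (f b : ZMod ℓ) = b + k - i then 1 else 0 := by
  have hle : 0 < b → f b ≤ f (b - 1) := fun _ => hf.1 (b - 1) b (by omega)
  unfold blockedEnd
  by_cases hres : (f b : ZMod ℓ) = b + k - i
  · by_cases hblocked : 0 < b ∧ f b = f (b - 1)
    · rw [if_pos ⟨hblocked.1, hblocked.2, hres⟩, if_pos hres,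
        if_neg fun h => by rcases h.1 with h | h <;> omega, sub_zero]
    · rw [if_neg fun h => hblocked ⟨h.1, h.2.1⟩, if_pos hres, if_pos ⟨by omega, hres⟩,
        sub_self]
  · simp [hres]

lemma rowHub_eq (hf : IsPartition f) (k i : ZMod ℓ) (b : ℕ) :
    rowHub ℓ f k i b =
      (2 * rowCount ℓ (f b) (b + k - i) - rowCount ℓ (f b) (b + k - i + 1) -
        rowCount ℓ (f b) (b + k - i - 1)) -
      (blockedEnd ℓ f k i (b + 1) - blockedEnd ℓ f k i b) -
      ((if (b : ZMod ℓ) + k - i = 0 then 1 else 0) -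
        if ((b + 1 : ℕ) : ZMod ℓ) + k - i = 0 then 1 else 0) := by
  have hnext : ((b + 1 : ℕ) : ZMod ℓ) + k - i = 0 ↔ (b : ZMod ℓ) + k - i = -1 := by
    push_cast; constructor <;> intro h <;> linear_combination h
  rw [rowCount_second_diff, blockedEnd_succ hf, blockedEnd_eq hf, rowHub]
  simp only [hnext]
  ring

lemma sum_rowHub (hf : IsPartition f) {N : ℕ} (hN : ∀ b, N ≤ b → f b = 0) (k i : ZMod ℓ) :
    ∑ b ∈ range (N + 1), rowHub ℓ f k i b =
      ∑ b ∈ range (N + 1), (2 * rowCount ℓ (f b) (b + k - i) -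
        rowCount ℓ (f b) (b + k - i + 1) - rowCount ℓ (f b) (b + k - i - 1)) -
      if k = i then 1 else 0 := by
  have hfirst : blockedEnd ℓ f k i 0 = 0 := by simp [blockedEnd]
  have hlast : blockedEnd ℓ f k i (N + 1) =
      if ((N + 1 : ℕ) : ZMod ℓ) + k - i = 0 then 1 else 0 := by
    simp [blockedEnd, hN N le_rfl, hN (N + 1) (by omega), eq_comm (a := (0 : ZMod ℓ))]
  have hfirstV : ((0 : ℕ) : ZMod ℓ) + k - i = 0 ↔ k = i := by simp [sub_eq_zero]
  have hblocked := sum_range_sub (blockedEnd ℓ f k i) (N + 1)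
  have hV :=
    sum_range_sub' (fun b : ℕ => if (b : ZMod ℓ) + k - i = 0 then (1 : ℤ) else 0) (N + 1)
  simp only [sum_sub_distrib, hfirst, hlast, hfirstV] at hblocked hV
  simp only [rowHub_eq hf, sum_sub_distrib]
  linarith

lemma nodeRes_eq_iff (k i : ZMod ℓ) (a b : ℕ) :
    nodeRes ℓ k (a, b) = i ↔ (a : ZMod ℓ) = b + k - i := by
  unfold nodeRes
  constructor <;> intro h <;> linear_combination -h

lemma sum_range_ite_lt_and (p : ℕ → Prop) [DecidablePred p] {m N : ℕ} (h : m ≤ N) :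
    ∑ a ∈ range N, (if a < m ∧ p a then (1 : ℤ) else 0) =
      ∑ a ∈ range m, if p a then 1 else 0 := by
  obtain ⟨d, rfl⟩ := Nat.exists_eq_add_of_le h
  rw [sum_range_add, add_eq_left.mpr (sum_eq_zero fun a _ => if_neg (by omega))]
  exact sum_congr rfl fun a ha => by simp [mem_range.mp ha]

lemma sum_range_ite_eq_and (p : ℕ → Prop) [DecidablePred p] {m N : ℕ} (h : m < N) :
    ∑ a ∈ range N, (if a = m ∧ p a then (1 : ℤ) else 0) = if p m then 1 else 0 := by
  simp [ite_and, h]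

lemma sum_range_nodes (k i : ZMod ℓ) (b : ℕ) {N : ℕ} (h : f b ≤ N) :
    ∑ a ∈ range N, (if a < f b ∧ nodeRes ℓ k (a, b) = i then (1 : ℤ) else 0) =
      rowCount ℓ (f b) (b + k - i) := by
  simp only [nodeRes_eq_iff]
  exact sum_range_ite_lt_and _ h

open Classical in
lemma sum_range_isRemovable (hf : IsPartition f) (k i : ZMod ℓ) (b : ℕ) {N : ℕ}
    (h : f b ≤ N) :
    ∑ a ∈ range N, (if IsRemovable f (a, b) ∧ nodeRes ℓ k (a, b) = i then (1 : ℤ) else 0) =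
      if f (b + 1) < f b ∧ (f b : ZMod ℓ) - 1 = b + k - i then 1 else 0 := by
  have hcond : ∀ a, (IsRemovable f (a, b) ∧ nodeRes ℓ k (a, b) = i) ↔
      a = f b - 1 ∧ (f (b + 1) < f b ∧ (f b : ZMod ℓ) - 1 = b + k - i) := fun a => by
    rw [isRemovable_iff hf, nodeRes_eq_iff]
    constructor
    · rintro ⟨⟨hlast, hlt⟩, hres⟩
      refine ⟨by omega, hlt, ?_⟩
      rw [← hlast]; push_cast; rwa [add_sub_cancel_right]
    · rintro ⟨ha, hlt, hres⟩
      have hlast : a + 1 = f b := by omega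
      rw [← hlast] at hres; push_cast at hres; rw [add_sub_cancel_right] at hres
      exact ⟨⟨hlast, hlt⟩, hres⟩
  simp only [hcond]
  by_cases hlt : f (b + 1) < f b
  · exact sum_range_ite_eq_and _ (by omega)
  · simp [hlt]

open Classical in
lemma sum_range_isAddable (hf : IsPartition f) (k i : ZMod ℓ) (b : ℕ) {N : ℕ}
    (h : f b < N) :
    ∑ a ∈ range N, (if IsAddable f (a, b) ∧ nodeRes ℓ k (a, b) = i then (1 : ℤ) else 0) =
      if (b = 0 ∨ f b < f (b - 1)) ∧ (f b : ZMod ℓ) = b + k - i then 1 else 0 := by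
  simp only [isAddable_iff hf, nodeRes_eq_iff, and_assoc]
  exact sum_range_ite_eq_and (fun a => (b = 0 ∨ f b < f (b - 1)) ∧ (a : ZMod ℓ) = b + k - i) h

end Rows

section Multipartitions

variable {ℓ r : ℕ} {Λ : Fin r → ℕ → ℕ}

lemma ncard_eq_sum_box (N : ℕ) (P : ℕ × ℕ × Fin r → Prop) [DecidablePred P]
    (hP : ∀ q, P q → q.1 < N ∧ q.2.1 < N + 1) :
    ({q | P q}.ncard : ℤ) =
      ∑ c, ∑ b ∈ range (N + 1), ∑ a ∈ range N, if P (a, b, c) then 1 else 0 := by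
  have hbox : {q | P q} = ↑((range N ×ˢ range (N + 1) ×ˢ univ).filter P) := by
    ext q
    simp only [Set.mem_ofPred_eq, coe_filter, mem_product, mem_range, mem_univ, and_true]
    exact ⟨fun h => ⟨hP q h, h⟩, And.right⟩
  rw [hbox, Set.ncard_coe_finset, card_filter, Nat.cast_sum, sum_product, sum_comm,
    sum_product]
  simp only [Nat.cast_ite, Nat.cast_one, Nat.cast_zero]
  exact sum_comm

lemma exists_bound (hΛ : ∀ c, IsPartition (Λ c)) :
    ∃ N, ∀ c b, Λ c b < N ∧ (N ≤ b → Λ c b = 0) := by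
  choose M hM using fun c => (hΛ c).2
  refine ⟨univ.sup fun c => M c + Λ c 0 + 1, fun c b => ⟨?_, fun hb => hM c b ?_⟩⟩ <;>
  · have := le_sup (f := fun c => M c + Λ c 0 + 1) (mem_univ c)
    have := (hΛ c).1 0 b (Nat.zero_le b)
    omega

lemma mRes_eq_sum {N : ℕ} (hN : ∀ c b, Λ c b < N ∧ (N ≤ b → Λ c b = 0)) (s : Fin r → ZMod ℓ)
    (i : ZMod ℓ) :
    mRes ℓ Λ s i = ∑ c, ∑ b ∈ range (N + 1), rowCount ℓ (Λ c b) (b + s c - i) := by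
  classical
  rw [mRes, Set.inter_def, ncard_eq_sum_box N]
  · exact sum_congr rfl fun c _ => sum_congr rfl fun b _ => by
      convert sum_range_nodes (s c) i b (hN c b).1.le using 4 <;> exact Iff.rfl
  · rintro ⟨a, b, c⟩ ⟨ha, -⟩
    have ha : a < Λ c b := ha
    have := hN c b
    show a < N ∧ b < N + 1
    omega

lemma hub_eq_sum (hΛ : ∀ c, IsPartition (Λ c)) {N : ℕ}
    (hN : ∀ c b, Λ c b < N ∧ (N ≤ b → Λ c b = 0)) (s : Fin r → ZMod ℓ) (i : ZMod ℓ) :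
    hub ℓ Λ s i = ∑ c, ∑ b ∈ range (N + 1), rowHub ℓ (Λ c) (s c) i b := by
  classical
  rw [hub, ncard_eq_sum_box N, ncard_eq_sum_box N]
  · rw [← sum_sub_distrib]
    refine sum_congr rfl fun c _ => ?_
    rw [← sum_sub_distrib]
    refine sum_congr rfl fun b _ => ?_
    rw [rowHub, ← sum_range_isRemovable (hΛ c) (s c) i b (hN c b).1.le,
      ← sum_range_isAddable (hΛ c) (s c) i b (hN c b).1]
  · rintro ⟨a, b, c⟩ ⟨hadd, -⟩
    rw [isAddable_iff (hΛ c)] at hadd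
    have := hN c b
    have := hN c (b - 1)
    dsimp only at hadd ⊢
    omega
  · rintro ⟨a, b, c⟩ ⟨hrem, -⟩
    rw [isRemovable_iff (hΛ c)] at hrem
    have := hN c b
    dsimp only at hrem ⊢
    omega

end Multipartitions

section Formulas

variable {ℓ r : ℕ} {Λ : Fin r → ℕ → ℕ}

lemma hub_eq (hΛ : ∀ c, IsPartition (Λ c)) (s : Fin r → ZMod ℓ) (i : ZMod ℓ) :
    hub ℓ Λ s i =
      2 * mRes ℓ Λ s i - mRes ℓ Λ s (i - 1) - mRes ℓ Λ s (i + 1) - wMulti ℓ s i := by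
  obtain ⟨N, hN⟩ := exists_bound hΛ
  have hprev : ∀ x : ZMod ℓ, x - (i - 1) = x - i + 1 := fun x => by ring
  have hnext : ∀ x : ZMod ℓ, x - (i + 1) = x - i - 1 := fun x => by ring
  rw [hub_eq_sum hΛ hN s, mRes_eq_sum hN, mRes_eq_sum hN, mRes_eq_sum hN, wMulti, card_filter,
    sum_congr rfl fun c _ => sum_rowHub (hΛ c) (fun b hb => (hN c b).2 hb) (s c) i]
  simp only [hprev, hnext, sum_sub_distrib, mul_sum, Nat.cast_sum, Nat.cast_ite, Nat.cast_one,
    Nat.cast_zero]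

lemma ncard_mNodes_eq_sum_mRes [NeZero ℓ] (hΛ : ∀ c, IsPartition (Λ c))
    (s : Fin r → ZMod ℓ) :
    ((mNodes Λ).ncard : ℤ) = ∑ i : ZMod ℓ, mRes ℓ Λ s i := by
  classical
  obtain ⟨N, hN⟩ := exists_bound hΛ
  rw [mNodes, ncard_eq_sum_box N]
  · simp only [mRes_eq_sum hN]
    rw [eq_comm, sum_comm]
    refine sum_congr rfl fun c _ => ?_
    rw [sum_comm]
    refine sum_congr rfl fun b _ => ?_
    simp only [← sum_range_nodes (s c) _ b (hN c b).1.le]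
    rw [sum_comm]
    simp [ite_and]
  · rintro ⟨a, b, c⟩ ha
    dsimp only at ha ⊢
    have := hN c b
    omega

end Formulas

lemma ZMod.apply_eq_apply_zero_of_add_one_eq {n : ℕ} {α : Type*} {g : ZMod n → α}
    (h : ∀ i, g (i + 1) = g i) (i : ZMod n) : g i = g 0 := by
  obtain ⟨m, rfl⟩ := ZMod.intCast_surjective i
  induction m using Int.induction_on with
  | zero => simp
  | succ m ih => rw [Int.cast_add, Int.cast_one, h, ih]
  | pred m ih => rw [← ih, ← h]; push_cast; ring_nf

lemma ZMod.apply_eq_apply_zero_of_harmonic {n : ℕ} [NeZero n] {G : Type*} [AddCommGroup G]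
    [IsAddTorsionFree G] {δ : ZMod n → G} (h : ∀ i, δ (i + 1) - δ i = δ i - δ (i - 1))
    (i : ZMod n) : δ i = δ 0 := by
  set e : ZMod n → G := fun i => δ (i + 1) - δ i
  have he : ∀ i, e i = e 0 := ZMod.apply_eq_apply_zero_of_add_one_eq fun i => by
    simpa only [e, add_sub_cancel_right] using h (i + 1)
  have hsum : ∑ i, e i = 0 := by
    simp only [e, sum_sub_distrib, sub_eq_zero]
    exact Equiv.sum_comp (Equiv.addRight 1) δ
  have he0 : e 0 = 0 := by
    rw [sum_congr rfl fun i _ => he i, sum_const, card_univ, ZMod.card] at hsum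
    exact (nsmul_eq_zero_iff_right (NeZero.ne n)).mp hsum
  exact ZMod.apply_eq_apply_zero_of_add_one_eq (fun i => sub_eq_zero.mp ((he i).trans he0)) i

section Comparison

variable {ℓ r : ℕ} {Λ M : Fin r → ℕ → ℕ} {s : Fin r → ZMod ℓ}

lemma weight_eq_add_of_mRes_eq_add [NeZero ℓ] {c : ℤ}
    (h : ∀ i, mRes ℓ Λ s i = mRes ℓ M s i + c) :
    weight ℓ Λ s = weight ℓ M s + r * c := by
  simp only [weight, h, add_sub_add_right_eq_sub, Int.cast_add, sum_add_distrib, sum_const,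
    card_univ, Fintype.card_fin, nsmul_eq_mul]
  ring

lemma mRes_eq_iff_hub_eq_and [NeZero ℓ] (hΛ : ∀ c, IsPartition (Λ c))
    (hM : ∀ c, IsPartition (M c)) {P : Prop} (hP : (∀ i, mRes ℓ Λ s i = mRes ℓ M s i) → P)
    (hshift : ∀ c : ℤ, (∀ i, mRes ℓ Λ s i = mRes ℓ M s i + c) → P → c = 0) :
    (∀ i, mRes ℓ Λ s i = mRes ℓ M s i) ↔ (∀ i, hub ℓ Λ s i = hub ℓ M s i) ∧ P := by
  refine ⟨fun h => ⟨fun i => by rw [hub_eq hΛ, hub_eq hM, h, h, h], hP h⟩, ?_⟩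
  rintro ⟨hhub, hp⟩
  set δ : ZMod ℓ → ℤ := fun i => mRes ℓ Λ s i - mRes ℓ M s i
  have hconst : ∀ i, δ i = δ 0 := ZMod.apply_eq_apply_zero_of_harmonic fun i => by
    have := hhub i
    rw [hub_eq hΛ, hub_eq hM] at this
    simp only [δ]
    linarith
  have hδ0 : δ 0 = 0 := hshift (δ 0) (fun i => by linarith [hconst i]) hp
  exact fun i => by linarith [hconst i]

end Comparison

/-- two charged multipartitions with the same multicharge have the
same residue vector iff they have the same hub and the same size, iff they have
the same hub and the same weight. -/
theorem stmt_8 (ℓ r : ℕ) [NeZero ℓ] (Λ M : Fin r → ℕ → ℕ)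
    (hΛ : ∀ c, IsPartition (Λ c)) (hM : ∀ c, IsPartition (M c))
    (s : Fin r → ZMod ℓ) :
    ((∀ i : ZMod ℓ, mRes ℓ Λ s i = mRes ℓ M s i) ↔
      ((∀ i : ZMod ℓ, hub ℓ Λ s i = hub ℓ M s i) ∧
        (mNodes Λ).ncard = (mNodes M).ncard)) ∧
    ((∀ i : ZMod ℓ, mRes ℓ Λ s i = mRes ℓ M s i) ↔
      ((∀ i : ZMod ℓ, hub ℓ Λ s i = hub ℓ M s i) ∧
        weight ℓ Λ s = weight ℓ M s)) := by
  have hsize := ncard_mNodes_eq_sum_mRes hΛ s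
  have hsizeM := ncard_mNodes_eq_sum_mRes hM s
  refine ⟨mRes_eq_iff_hub_eq_and hΛ hM (fun h => ?_) (fun c hc hsizes => ?_),
    mRes_eq_iff_hub_eq_and hΛ hM (fun h => by simp only [weight, h]) (fun c hc hweights => ?_)⟩
  · exact_mod_cast hsize.trans ((sum_congr rfl fun i _ => h i).trans hsizeM.symm)
  · have : (ℓ : ℤ) * c = 0 := by
      simp only [hc, sum_add_distrib, sum_const, card_univ, ZMod.card, nsmul_eq_mul] at hsize
      rw [hsizes] at hsize
      linarith
    exact (mul_eq_zero.mp this).resolve_left (Nat.cast_ne_zero.mpr (NeZero.ne ℓ))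
  · rw [weight_eq_add_of_mRes_eq_add hc, add_eq_left, mul_eq_zero] at hweights
    rcases hweights with hr | hc0
    · obtain rfl : r = 0 := by exact_mod_cast hr
      simpa [mRes, Set.eq_empty_of_isEmpty, eq_comm] using hc 0
    · exact_mod_cast hc0
end

section
/- For every charged r-multipartition (λ•, s), with d = Res_ℓ(λ•, s), one has 2·Σ_{j=1}^r d_{s_j} ≥ Σ_{i∈ℤ/ℓℤ} (d_i − d_{i+1})²; moreover Σ_{i∈ℤ/ℓℤ}(d_i − d_{i+1})² is even, so the weight Ω_ℓ(λ•, s) is a non-negative integer. -/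
/-!
Write `n_c k` for the number of nodes of content `k` of the `c`-th component and
`δ_c k = n_c k - n_c (k + 1)`. Along the diagonals of a partition, `δ_c k ∈ {0, 1}` for `k ≥ 0`
and `δ_c k ∈ {-1, 0}` for `k < 0`. Expanding the square, `Σ_i (d_i - d_{i+1})²` is the sum, over
pairs of components `c, c'` and offsets `D` with `D + s_c = s_{c'}`, of `Σ_k δ_c k · δ_{c'} (k - D)`.
A term is positive only when both steps lie on the same side of the main diagonal, and
telescoping bounds the inner sum by `n_c D + n_{c'} (-D)`; summing over `D` and over pairs gives
`2 Σ_j d_{s_j}`. Evenness holds for every vector `d`: `x² ≡ x (mod 2)` and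
`Σ_i (d_i - d_{i+1}) = 0`.
-/

open Finset Function

namespace Multipartition

theorem sum_comp_equiv_of_support_subset {α β M : Type*} [AddCommMonoid M] (e : α ≃ β)
    {f : β → M} {s : Finset α} {t : Finset β} (hs : support (f ∘ e) ⊆ s) (ht : support f ⊆ t) :
    ∑ a ∈ s, f (e a) = ∑ b ∈ t, f b := by
  rw [← finsum_eq_sum_of_support_subset _ ht, ← finsum_comp_equiv e]
  exact (finsum_eq_sum_of_support_subset (f ∘ e) hs).symm

theorem sum_Ico_sub_add_one {M : Type*} [AddCommGroup M] (f : ℤ → M) {a b : ℤ} (hab : a ≤ b) :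
    ∑ k ∈ Ico a b, (f k - f (k + 1)) = f a - f b := by
  induction b, hab using Int.leInduction with
  | base => simp
  | succ b hab ih =>
    rw [Ico_add_one_right_eq_Icc, ← Ico_insert_right hab, sum_insert (by simp), ih]
    abel

theorem card_le_card_add_one_of_surjOn_erase {α β : Type*} [DecidableEq β] {s : Finset α}
    {t : Finset β} {x : β} (g : α → β) (hg : Set.SurjOn g s (t.erase x)) : #t ≤ #s + 1 := by
  have := card_le_card_of_surjOn g hg
  have := pred_card_le_card_erase (s := t) (a := x)
  omega

theorem even_sum_sq_sub {G : Type*} [AddGroup G] [Fintype G] (d : G → ℤ) (g : G) :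
    Even (∑ i, (d i - d (i + g)) ^ 2) := by
  have hzero : ∑ i, (d i - d (i + g)) = 0 := by
    rw [sum_sub_distrib, sub_eq_zero]
    exact (Fintype.sum_equiv (Equiv.addRight g) _ _ fun _ => rfl).symm
  have hsplit : ∑ i, (d i - d (i + g)) ^ 2
      = ∑ i, (d i - d (i + g)) * (d i - d (i + g) - 1) + ∑ i, (d i - d (i + g)) := by
    rw [← sum_add_distrib]
    exact sum_congr rfl fun _ _ => by ring
  rw [hsplit, hzero, add_zero]
  exact even_sum _ fun i _ => Int.even_mul_pred_self _

/-- Abstracts the diagonal lengths `k ↦ #{nodes of content k}` of a partition whose Young diagram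
lies in `[0, N)²`. -/
structure IsDiagProfile (N : ℕ) (n : ℤ → ℤ) : Prop where
  eq_zero : ∀ k, (N : ℤ) ≤ k ∨ k ≤ -N → n k = 0
  step_of_nonneg : ∀ k, 0 ≤ k → n (k + 1) ≤ n k ∧ n k ≤ n (k + 1) + 1
  step_of_neg : ∀ k, k < 0 → n k ≤ n (k + 1) ∧ n (k + 1) ≤ n k + 1

namespace IsDiagProfile

variable {N M : ℕ} {n n' : ℤ → ℤ}

theorem step_eq_zero (hn : IsDiagProfile N n) {k : ℤ} (hk : k < -N ∨ N ≤ k) :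
    n k - n (k + 1) = 0 := by
  rw [hn.eq_zero k (by omega), hn.eq_zero (k + 1) (by omega), sub_self]

theorem support_step_subset (hn : IsDiagProfile N n) :
    support (fun k => n k - n (k + 1)) ⊆ Icc (-(N : ℤ)) N := by
  intro k hk
  by_contra h
  exact hk (hn.step_eq_zero (by simp only [coe_Icc, Set.mem_Icc] at h; omega))

/-- Diagonals of nonnegative index only shrink and those of negative index only grow, so a
product of two steps is bounded by a step of one profile on the overlapping half-line. -/
theorem sum_step_mul_step_le_of_nonneg (hn : IsDiagProfile N n) (hn' : IsDiagProfile N n')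
    (hNM : N ≤ M) {D : ℤ} (hD : 0 ≤ D) (hDM : D ≤ M) :
    ∑ k ∈ Icc (-(M : ℤ)) M, (n k - n (k + 1)) * (n' (k - D) - n' (k - D + 1)) ≤
      n D + n' (-D) := by
  have hpoint : ∀ k, (n k - n (k + 1)) * (n' (k - D) - n' (k - D + 1)) ≤
      (if D ≤ k then n k - n (k + 1) else 0) +
        (if k < 0 then -n' (k - D) - -n' (k - D + 1) else 0) := by
    intro k
    rcases lt_or_ge k 0 with hk | hk
    · have := hn.step_of_neg k hk
      have := hn'.step_of_neg (k - D) (by omega)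
      rw [if_neg (show ¬D ≤ k by omega), if_pos hk]
      nlinarith
    · have := hn.step_of_nonneg k hk
      rw [if_neg (show ¬k < 0 by omega)]
      split_ifs with hkD
      · have := hn'.step_of_nonneg (k - D) (by omega)
        nlinarith
      · have := hn'.step_of_neg (k - D) (by omega)
        nlinarith
  have hpos : ∑ k ∈ Icc (-(M : ℤ)) M, (if D ≤ k then n k - n (k + 1) else 0) = n D := by
    rw [← sum_filter, show (Icc (-(M : ℤ)) M).filter (D ≤ ·) = Ico D (M + 1) by
      ext; simp only [mem_filter, mem_Icc, mem_Ico]; omega,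
      sum_Ico_sub_add_one n (by omega), hn.eq_zero (M + 1) (by omega), sub_zero]
  have hneg : ∑ k ∈ Icc (-(M : ℤ)) M,
      (if k < 0 then -n' (k - D) - -n' (k - D + 1) else 0) = n' (-D) := by
    rw [← sum_filter, show (Icc (-(M : ℤ)) M).filter (· < 0) = Ico (-(M : ℤ)) 0 by
      ext; simp only [mem_filter, mem_Icc, mem_Ico]; omega]
    have htel := sum_Ico_sub_add_one (fun k => -n' (k - D)) (show -(M : ℤ) ≤ 0 by omega)
    simp only [add_sub_right_comm] at htel
    rw [htel, hn'.eq_zero (-M - D) (by omega)]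
    simp
  calc _ ≤ _ := sum_le_sum fun k _ => hpoint k
    _ = n D + n' (-D) := by rw [sum_add_distrib, hpos, hneg]

theorem sum_step_mul_step_le (hn : IsDiagProfile N n) (hn' : IsDiagProfile N n')
    (hNM : N ≤ M) {D : ℤ} (hD : D ∈ Icc (-(M : ℤ)) M) :
    ∑ k ∈ Icc (-(M : ℤ)) M, (n k - n (k + 1)) * (n' (k - D) - n' (k - D + 1)) ≤
      n D + n' (-D) := by
  rw [mem_Icc] at hD
  rcases le_or_gt 0 D with h0 | h0
  · exact hn.sum_step_mul_step_le_of_nonneg hn' hNM h0 hD.2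
  have hswap : ∑ k ∈ Icc (-(M : ℤ)) M, (n k - n (k + 1)) * (n' (k - D) - n' (k - D + 1)) =
      ∑ m ∈ Icc (-(M : ℤ)) M, (n' m - n' (m + 1)) * (n (m - -D) - n (m - -D + 1)) := by
    refine (sum_comp_equiv_of_support_subset (Equiv.addRight D) ?_ ?_).symm.trans
      (sum_congr rfl fun m _ => ?_)
    · intro m hm
      by_contra h
      apply hm
      simp only [comp_apply, Equiv.coe_addRight, add_sub_cancel_right]
      rw [hn'.step_eq_zero (by simp only [coe_Icc, Set.mem_Icc] at h; omega), mul_zero]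
    · intro k hk
      by_contra h
      apply hk
      beta_reduce
      rw [hn.step_eq_zero (k := k) (by simp only [coe_Icc, Set.mem_Icc] at h; omega), zero_mul]
    · simp only [Equiv.coe_addRight, add_sub_cancel_right, sub_neg_eq_add]; ring
  have h := hn'.sum_step_mul_step_le_of_nonneg hn hNM (D := -D) (by omega) (by omega)
  rw [neg_neg] at h
  rw [hswap, add_comm]
  exact h

end IsDiagProfile

section Residues

/-- If `n` lists the diagonal lengths of a partition with charge `s`, this counts its nodes of
residue `i`. -/
noncomputable def resSum {ℓ : ℕ} (M : ℕ) (s : ZMod ℓ) (n : ℤ → ℤ) (i : ZMod ℓ) : ℤ :=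
  ∑ k ∈ Icc (-(M : ℤ)) M, if (k : ZMod ℓ) + s = i then n k else 0

variable {ℓ N M : ℕ}

theorem resSum_sub_resSum_add_one {n : ℤ → ℤ} (hn : ∀ k, (M : ℤ) ≤ k ∨ k ≤ -M → n k = 0)
    (s i : ZMod ℓ) :
    resSum M s n i - resSum M s n (i + 1) = resSum M s (fun k => n k - n (k + 1)) i := by
  have hshift : resSum M s n (i + 1) =
      ∑ k ∈ Icc (-(M : ℤ)) M, if (k : ZMod ℓ) + s = i then n (k + 1) else 0 := by
    rw [resSum, ← sum_comp_equiv_of_support_subset (Equiv.addRight (1 : ℤ))]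
    · refine sum_congr rfl fun k _ => ?_
      simp only [Equiv.coe_addRight, Int.cast_add, Int.cast_one, add_right_comm _ (1 : ZMod ℓ),
        add_left_inj]
    · intro k hk
      by_contra h
      apply hk
      simp only [coe_Icc, Set.mem_Icc] at h
      simp [hn (k + 1) (by omega)]
    · intro k hk
      by_contra h
      apply hk
      simp only [coe_Icc, Set.mem_Icc] at h
      simp [hn k (by omega)]
  rw [hshift, resSum, resSum, ← sum_sub_distrib]
  refine sum_congr rfl fun k _ => ?_
  split_ifs <;> simp

theorem sum_resSum_mul [NeZero ℓ] (s : ZMod ℓ) (n : ℤ → ℤ) (X : ZMod ℓ → ℤ) :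
    ∑ i, resSum M s n i * X i = ∑ k ∈ Icc (-(M : ℤ)) M, n k * X (k + s) := by
  simp only [resSum, sum_mul, ite_mul, zero_mul]
  rw [sum_comm]
  simp

theorem sum_resSum_mul_resSum [NeZero ℓ] {a b : ℤ → ℤ} (ha : support a ⊆ Icc (-(N : ℤ)) N)
    (hb : support b ⊆ Icc (-(N : ℤ)) N) (hM : 2 * N ≤ M) (s t : ZMod ℓ) :
    ∑ i, resSum M s a i * resSum M t b i =
      ∑ D ∈ Icc (-(M : ℤ)) M,
        if (D : ZMod ℓ) + s = t then ∑ k ∈ Icc (-(M : ℤ)) M, a k * b (k - D) else 0 := by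
  rw [sum_resSum_mul]
  have hinner : ∀ k, a k * resSum M t b (k + s) = ∑ D ∈ Icc (-(M : ℤ)) M,
      if (D : ZMod ℓ) + s = t then a k * b (k - D) else 0 := by
    intro k
    rw [resSum, mul_sum]
    simp only [mul_ite, mul_zero]
    rw [← sum_comp_equiv_of_support_subset (Equiv.subLeft k)]
    · refine sum_congr rfl fun D _ => if_congr ?_ rfl rfl
      simp only [Equiv.subLeft_apply, Int.cast_sub]
      constructor <;> intro h <;> linear_combination -h
    · intro D hD
      have h1 : k ∈ (Icc (-(N : ℤ)) N : Set ℤ) := ha fun h => hD (by simp [h])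
      have h2 : k - D ∈ (Icc (-(N : ℤ)) N : Set ℤ) := hb fun h => hD (by simp [h])
      simp only [coe_Icc, Set.mem_Icc] at h1 h2 ⊢
      omega
    · intro m hm
      have h : m ∈ (Icc (-(N : ℤ)) N : Set ℤ) := hb fun h => hm (by simp [h])
      simp only [coe_Icc, Set.mem_Icc] at h ⊢
      omega
  simp only [hinner]
  rw [sum_comm]
  simp only [sum_ite_irrel, sum_const_zero]

theorem IsDiagProfile.sum_resSum_step_mul_le [NeZero ℓ] {n n' : ℤ → ℤ} (hn : IsDiagProfile N n)
    (hn' : IsDiagProfile N n') (hM : 2 * N ≤ M) (s t : ZMod ℓ) :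
    ∑ i, (resSum M s n i - resSum M s n (i + 1)) * (resSum M t n' i - resSum M t n' (i + 1)) ≤
      resSum M s n t + resSum M t n' s := by
  have hvan : ∀ {m : ℤ → ℤ}, IsDiagProfile N m → ∀ k, (M : ℤ) ≤ k ∨ k ≤ -M → m k = 0 :=
    fun hm k hk => hm.eq_zero k (by omega)
  have hneg : resSum M t n' s =
      ∑ D ∈ Icc (-(M : ℤ)) M, if (D : ZMod ℓ) + s = t then n' (-D) else 0 := by
    rw [resSum, ← sum_comp_equiv_of_support_subset (Equiv.neg ℤ)]
    · refine sum_congr rfl fun D _ => if_congr ?_ rfl rfl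
      simp only [Equiv.neg_apply, Int.cast_neg]
      constructor <;> intro h <;> linear_combination -h
    · intro D hD
      by_contra h
      simp only [coe_Icc, Set.mem_Icc] at h
      apply hD
      simp [hvan hn' (-D) (by omega)]
    · intro D hD
      by_contra h
      simp only [coe_Icc, Set.mem_Icc] at h
      apply hD
      simp [hvan hn' D (by omega)]
  simp only [resSum_sub_resSum_add_one (hvan hn), resSum_sub_resSum_add_one (hvan hn')]
  rw [sum_resSum_mul_resSum hn.support_step_subset hn'.support_step_subset hM, hneg, resSum,
    ← sum_add_distrib]
  refine sum_le_sum fun D hD => ?_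
  split_ifs
  · exact hn.sum_step_mul_step_le hn' (by omega) hD
  · simp

theorem sum_sq_sub_le_two_mul_sum {ι : Type*} [Fintype ι] [NeZero ℓ] {n : ι → ℤ → ℤ}
    (hn : ∀ c, IsDiagProfile N (n c)) (hM : 2 * N ≤ M) (s : ι → ZMod ℓ) :
    ∑ i, (∑ c, resSum M (s c) (n c) i - ∑ c, resSum M (s c) (n c) (i + 1)) ^ 2 ≤
      2 * ∑ j, ∑ c, resSum M (s c) (n c) (s j) := by
  calc _ = ∑ c, ∑ c', ∑ i, (resSum M (s c) (n c) i - resSum M (s c) (n c) (i + 1)) *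
        (resSum M (s c') (n c') i - resSum M (s c') (n c') (i + 1)) := by
        simp only [← sum_sub_distrib, sq, sum_mul_sum]
        rw [sum_comm]
        exact sum_congr rfl fun c _ => sum_comm
    _ ≤ ∑ c, ∑ c', (resSum M (s c) (n c) (s c') + resSum M (s c') (n c') (s c)) :=
        sum_le_sum fun c _ => sum_le_sum fun c' _ => (hn c).sum_resSum_step_mul_le (hn c') hM _ _
    _ = 2 * ∑ j, ∑ c, resSum M (s c) (n c) (s j) := by
        simp only [sum_add_distrib]
        rw [sum_comm]
        ring

end Residues

section Partitions

def diagNodes (N : ℕ) (f : ℕ → ℕ) (k : ℤ) : Finset (ℕ × ℕ) :=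
  (range N ×ˢ range N).filter fun p => p.1 < f p.2 ∧ (p.2 : ℤ) - p.1 = k

def diagCount (N : ℕ) (f : ℕ → ℕ) (k : ℤ) : ℤ := #(diagNodes N f k)

variable {N : ℕ} {f : ℕ → ℕ}

theorem mem_diagNodes {k : ℤ} {a b : ℕ} :
    (a, b) ∈ diagNodes N f k ↔ a < N ∧ b < N ∧ a < f b ∧ (b : ℤ) - a = k := by
  simp [diagNodes, and_assoc]

theorem isDiagProfile_diagCount (hf : Antitone f) (N : ℕ) : IsDiagProfile N (diagCount N f) where
  eq_zero k hk := by
    rw [diagCount, Nat.cast_eq_zero, card_eq_zero, eq_empty_iff_forall_notMem]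
    rintro ⟨a, b⟩ h
    rw [mem_diagNodes] at h
    omega
  step_of_nonneg k hk := by
    constructor
    · refine Nat.cast_le.2 (card_le_card_of_surjOn (fun p => (p.1, p.2 + 1)) ?_)
      rintro ⟨a, b⟩ h
      rw [mem_coe, mem_diagNodes] at h
      have := hf (Nat.sub_le b 1)
      refine ⟨(a, b - 1), ?_, Prod.ext rfl (Nat.sub_add_cancel (by omega))⟩
      rw [mem_coe, mem_diagNodes]
      omega
    · refine Nat.cast_le.2 (card_le_card_add_one_of_surjOn_erase (x := (0, k.toNat))
        (fun p => (p.1 + 1, p.2)) ?_)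
      rintro ⟨a, b⟩ h
      rw [mem_coe, mem_erase, mem_diagNodes, ne_eq, Prod.mk.injEq] at h
      refine ⟨(a - 1, b), ?_, Prod.ext (Nat.sub_add_cancel (by omega)) rfl⟩
      rw [mem_coe, mem_diagNodes]
      omega
  step_of_neg k hk := by
    constructor
    · refine Nat.cast_le.2 (card_le_card_of_surjOn (fun p => (p.1 + 1, p.2)) ?_)
      rintro ⟨a, b⟩ h
      rw [mem_coe, mem_diagNodes] at h
      refine ⟨(a - 1, b), ?_, Prod.ext (Nat.sub_add_cancel (by omega)) rfl⟩
      rw [mem_coe, mem_diagNodes]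
      omega
    · refine Nat.cast_le.2 (card_le_card_add_one_of_surjOn_erase (x := ((-(k + 1)).toNat, 0))
        (fun p => (p.1, p.2 + 1)) ?_)
      rintro ⟨a, b⟩ h
      rw [mem_coe, mem_erase, mem_diagNodes, ne_eq, Prod.mk.injEq] at h
      have := hf (Nat.sub_le b 1)
      refine ⟨(a, b - 1), ?_, Prod.ext rfl (Nat.sub_add_cancel (by omega))⟩
      rw [mem_coe, mem_diagNodes]
      omega

theorem nodeRes_eq_intCast (ℓ : ℕ) (s : ZMod ℓ) (p : ℕ × ℕ) :
    nodeRes ℓ s p = (((p.2 : ℤ) - p.1 : ℤ) : ZMod ℓ) + s := by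
  simp [nodeRes]

theorem resSum_diagCount {ℓ M : ℕ} (hNM : N ≤ M) (s i : ZMod ℓ) :
    resSum M s (diagCount N f) i =
      #((range N ×ˢ range N).filter fun p => p.1 < f p.2 ∧ nodeRes ℓ s p = i) := by
  rw [card_eq_sum_card_fiberwise (f := fun p => (p.2 : ℤ) - p.1) (t := Icc (-(M : ℤ)) M), resSum,
    Nat.cast_sum]
  · refine sum_congr rfl fun k _ => ?_
    split_ifs with hk
    · rw [diagCount]
      congr 2
      ext ⟨a, b⟩
      simp only [mem_diagNodes, mem_filter, mem_product, mem_range, nodeRes_eq_intCast]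
      constructor
      · rintro ⟨ha, hb, hab, rfl⟩
        exact ⟨⟨⟨ha, hb⟩, hab, hk⟩, rfl⟩
      · rintro ⟨⟨⟨ha, hb⟩, hab, -⟩, hk'⟩
        exact ⟨ha, hb, hab, hk'⟩
    · refine (Nat.cast_eq_zero.2 (card_eq_zero.2 (filter_eq_empty_iff.2 ?_))).symm
      rintro ⟨a, b⟩ h rfl
      simp only [mem_filter, nodeRes_eq_intCast] at h
      exact hk h.2.2
  · rintro ⟨a, b⟩ h
    simp only [coe_filter, mem_product, mem_range, Set.mem_ofPred_eq] at h
    simp only [coe_Icc, Set.mem_Icc]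
    omega

theorem mRes_eq_sum_resSum {ℓ r N M : ℕ} {Λ : Fin r → ℕ → ℕ}
    (hbox : ∀ q ∈ mNodes Λ, q.1 < N ∧ q.2.1 < N) (hNM : N ≤ M) (s : Fin r → ZMod ℓ)
    (i : ZMod ℓ) : mRes ℓ Λ s i = ∑ c, resSum M (s c) (diagCount N (Λ c)) i := by
  have hset : mNodes Λ ∩ {q | nodeRes ℓ (s q.2.2) (q.1, q.2.1) = i} =
      ↑((range N ×ˢ range N ×ˢ univ).filter fun q : ℕ × ℕ × Fin r =>
        q.1 < Λ q.2.2 q.2.1 ∧ nodeRes ℓ (s q.2.2) (q.1, q.2.1) = i) := by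
    ext q
    have := hbox q
    simp only [mNodes, Set.mem_inter_iff, Set.mem_ofPred_eq, coe_filter, mem_product, mem_range,
      mem_univ, and_true] at this ⊢
    tauto
  simp only [mRes, hset, Set.ncard_coe_finset, resSum_diagCount hNM, card_filter, sum_product]
  push_cast
  rw [eq_comm, sum_comm]
  exact sum_congr rfl fun _ _ => sum_comm

theorem exists_mNodes_subset_box {r : ℕ} {Λ : Fin r → ℕ → ℕ} (hΛ : ∀ c, IsPartition (Λ c)) :
    ∃ N, ∀ q ∈ mNodes Λ, q.1 < N ∧ q.2.1 < N := by
  choose B hB using fun c => (hΛ c).2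
  refine ⟨∑ c, (B c + Λ c 0), fun ⟨a, b, c⟩ h => ?_⟩
  simp only [mNodes, Set.mem_ofPred_eq] at h
  have hc := single_le_sum (f := fun c => B c + Λ c 0) (fun _ _ => Nat.zero_le _) (mem_univ c)
  have hb : b < B c := by
    by_contra! hb
    have := hB c b hb
    omega
  have := (hΛ c).1 0 b (Nat.zero_le b)
  dsimp only at hc ⊢
  omega

end Partitions

end Multipartition

open Multipartition

/-- with `d = Res_ℓ(λ•,s)`, one has
`2 Σ_j d_{s_j} ≥ Σ_i (d_i - d_{i+1})²` and the right-hand sum is even, so the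
weight `Ω_ℓ(λ•,s)` is a non-negative integer. -/
theorem stmt_9 (ℓ r : ℕ) [NeZero ℓ] (Λ : Fin r → ℕ → ℕ)
    (hΛ : ∀ c, IsPartition (Λ c)) (s : Fin r → ZMod ℓ) :
    (∑ i : ZMod ℓ, (mRes ℓ Λ s i - mRes ℓ Λ s (i + 1)) ^ 2) ≤
        2 * ∑ j : Fin r, mRes ℓ Λ s (s j) ∧
      Even (∑ i : ZMod ℓ, (mRes ℓ Λ s i - mRes ℓ Λ s (i + 1)) ^ 2) := by
  obtain ⟨N, hbox⟩ := exists_mNodes_subset_box hΛ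
  have hd : mRes ℓ Λ s = fun i => ∑ c, resSum (2 * N) (s c) (diagCount N (Λ c)) i :=
    funext (mRes_eq_sum_resSum hbox (by omega) s)
  refine ⟨?_, even_sum_sq_sub _ 1⟩
  rw [hd]
  exact sum_sq_sub_le_two_mul_sum (fun c => isDiagProfile_diagCount (fun _ _ => (hΛ c).1 _ _) N)
    le_rfl s
end
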